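/- Let V be an optimal prefix-free machine such that V⁻¹(s) is a finite set for every finite binary string s. Then the function s ↦ #V⁻¹(s) is not bounded above on {0,1}*; that is, for every M ∈ ℕ there exists s with #V⁻¹(s) > M. -/

import Mathlib

open scoped ENNReal

/-- A set of binary strings is prefix-free: no element is a proper prefix of another. -/
def PrefixFreeSet (S : Set (List Bool)) : Prop :=
  ∀ p ∈ S, ∀ q ∈ S, p <+: q → p = q

/-- A prefix-free machine: a partial recursive function on binary strings
whose domain is a prefix-free set. -/
def PFMachine (C : List Bool →. List Bool) : Prop :=
  Partrec C ∧ PrefixFreeSet C.Dom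

/-- `Hm C s` is the length of a shortest program `p` with `C p = s` (`∞` if none). -/
noncomputable def Hm (C : List Bool →. List Bool) (s : List Bool) : ℕ∞ :=
  sInf ((fun p : List Bool => (p.length : ℕ∞)) '' {p | s ∈ C p})

/-- An optimal prefix-free machine: for every prefix-free machine `C` there is `d ∈ ℕ`
such that every `p ∈ dom C` has a `q` with `U q = C p` and `|q| ≤ |p| + d`. -/
def OptimalPFM (U : List Bool →. List Bool) : Prop :=
  PFMachine U ∧ ∀ C : List Bool →. List Bool, PFMachine C →
    ∃ d : ℕ, ∀ p s, s ∈ C p → ∃ q : List Bool, s ∈ U q ∧ q.length ≤ p.length + d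

/-- The binary string identified with `n : ℕ` via `φ(s) = (the dyadic integer 1s) − 1`. -/
def strOfNat (n : ℕ) : List Bool := ((n + 1).bits.dropLast).reverse

/-!
Suppose every fiber of `V` has at most `M` elements. Then there is a level `N` such that infinitely
many strings have exactly `N` programs while only finitely many have more; the latter all have
length below some bound `L₀`. Given `n`, search for a string `s` with `|s| ≥ L₀` together with `N`
distinct programs for `s`, all longer than `n`. The search succeeds, because only finitely many
strings have a program of length `≤ n`, and the programs it finds are then all programs of `s`.
Running it on `n = 2k` from the unary code of `k` gives a prefix-free machine whose outputs have
no `V`-program of length `≤ 2k`, whereas optimality provides one of length `≤ k + 1 + d`.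
-/

open Encodable Nat.Partrec

def unary (k : ℕ) : List Bool := List.replicate k true ++ [false]

@[simp] theorem length_unary (k : ℕ) : (unary k).length = k + 1 := by simp [unary]

theorem eq_of_unary_prefix_unary {a b : ℕ} (h : unary a <+: unary b) : a = b := by
  have hle : a ≤ b := by simpa using h.length_le
  by_contra hne
  have htake := List.prefix_iff_eq_take.mp h
  rw [length_unary] at htake
  simp only [unary] at htake
  rw [List.take_append_of_le_length (by simp; omega), List.take_replicate,
    min_eq_left (by omega), List.replicate_succ'] at htake
  simp at htake

theorem primrec_unary : Primrec unary :=
  (Primrec.list_append.comp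
      (Primrec.list_map Primrec.list_range (Primrec.const true).to₂) (Primrec.const [false])).of_eq
    fun k => by simp [unary, List.map_const']

def unaryMachine (F : ℕ →. List Bool) : List Bool →. List Bool := fun p =>
  if p = unary (p.length - 1) then F (p.length - 1) else Part.none

theorem mem_unaryMachine_unary {F : ℕ →. List Bool} {k : ℕ} {s : List Bool} :
    s ∈ unaryMachine F (unary k) ↔ s ∈ F k := by
  simp [unaryMachine]

theorem pfMachine_unaryMachine {F : ℕ →. List Bool} (hF : Partrec F) :
    PFMachine (unaryMachine F) := by
  refine ⟨?_, ?_⟩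
  · have hlen : Primrec fun p : List Bool => p.length - 1 :=
      Primrec.nat_sub.comp Primrec.list_length (Primrec.const 1)
    refine (Partrec.cond (Primrec.eq.comp Primrec.id (primrec_unary.comp hlen)).decide.to_comp
      (hF.comp hlen.to_comp) Partrec.none).of_eq fun p => by
        simp only [unaryMachine, id, Bool.cond_decide]
  · have hdom : ∀ p, (unaryMachine F p).Dom → ∃ k, p = unary k := fun p hp => by
      by_contra! h
      rw [unaryMachine, if_neg (h _)] at hp
      exact Part.not_none_dom hp
    intro p hp q hq hpq
    obtain ⟨a, rfl⟩ := hdom p hp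
    obtain ⟨b, rfl⟩ := hdom q hq
    rw [eq_of_unary_prefix_unary hpq]

theorem OptimalPFM.exists_length_le_of_partrec {V : List Bool →. List Bool} (hV : OptimalPFM V)
    {F : ℕ →. List Bool} (hF : Partrec F) :
    ∃ d, ∀ k s, s ∈ F k → ∃ q, s ∈ V q ∧ q.length ≤ k + 1 + d := by
  obtain ⟨d, hd⟩ := hV.2 _ (pfMachine_unaryMachine hF)
  exact ⟨d, fun k s hs => by simpa using hd (unary k) s (mem_unaryMachine_unary.mpr hs)⟩

theorem exists_stage_forall_mem {α σ : Type*} {g : ℕ → α → Option σ}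
    (hmono : ∀ ⦃t t' a b⦄, t ≤ t' → g t a = some b → g t' a = some b) {L : List α} {b : σ}
    (hL : ∀ a ∈ L, ∃ t, g t a = some b) : ∃ t, ∀ a ∈ L, g t a = some b := by
  induction L with
  | nil => exact ⟨0, by simp⟩
  | cons a L ih =>
    obtain ⟨t₁, ht₁⟩ := hL a (by simp)
    obtain ⟨t₂, ht₂⟩ := ih fun a' ha' => hL a' (by simp [ha'])
    refine ⟨max t₁ t₂, ?_⟩
    simp only [List.mem_cons, forall_eq_or_imp]
    exact ⟨hmono (le_max_left _ _) ht₁, fun a' ha' => hmono (le_max_right _ _) (ht₂ a' ha')⟩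

section Computability

variable {α β σ : Type*} [Primcodable α] [Primcodable β] [Primcodable σ]

theorem Partrec.exists_primrec_stage {f : α →. σ} (hf : Partrec f) :
    ∃ g : ℕ → α → Option σ, Primrec₂ g ∧
      (∀ ⦃t t' a b⦄, t ≤ t' → g t a = some b → g t' a = some b) ∧
      ∀ a b, b ∈ f a ↔ ∃ t, g t a = some b := by
  obtain ⟨c, hc⟩ := Code.exists_code.1 hf
  refine ⟨fun t a => (Code.evaln t c (encode a)).bind (decode₂ σ), ?_, ?_, ?_⟩
  · exact Primrec.option_bind
      (Code.primrec_evaln.comp ((Primrec.fst.pair (Primrec.const c)).pair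
        (Primrec.encode.comp Primrec.snd)))
      (Primrec.decode₂.comp Primrec.snd).to₂
  · intro t t' a b htt' h
    simp only [Option.bind_eq_some_iff] at h ⊢
    obtain ⟨m, hm, hb⟩ := h
    exact ⟨m, Code.evaln_mono htt' hm, hb⟩
  · intro a b
    have hev : Code.eval c (encode a) = (f a).map encode := by simp [hc, encodek]
    have hstage : ∀ t, (Code.evaln t c (encode a)).bind (decode₂ σ) = some b ↔
        encode b ∈ Code.evaln t c (encode a) := fun t => by
      simp only [Option.bind_eq_some_iff, decode₂_eq_some, exists_eq_right', Option.mem_def]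
    simp only [hstage, ← Code.evaln_complete, hev, Part.mem_map_iff, encode_injective.eq_iff,
      exists_eq_right]

theorem Primrec.list_nodup : PrimrecPred (List.Nodup : List α → Prop) := by
  classical
  have hcount : PrimrecRel fun (a : α) (L : List α) => (L.filter (· = a)).length ≤ 1 :=
    Primrec.nat_le.comp (Primrec.list_length.comp
      ((PrimrecRel.listFilter Primrec.eq).comp Primrec.snd Primrec.fst)) (Primrec.const 1)
  refine ((PrimrecRel.forall_mem_list hcount).comp Primrec.id Primrec.id).of_eq fun L => ?_
  simp only [List.nodup_iff_count_le_one, List.count_eq_length_filter]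
  refine ⟨fun h a => ?_, fun h a _ => h a⟩
  by_cases ha : a ∈ L
  · exact h a ha
  · simp [← List.count_eq_length_filter, List.count_eq_zero_of_not_mem ha]

theorem PrimrecRel.exists_partrec_choice {R : α → β → Prop} (hR : PrimrecRel R)
    (h : ∀ a, ∃ b, R a b) : ∃ f : α →. β, Partrec f ∧ ∀ a, ∃ b ∈ f a, R a b := by
  classical
  let g : α → ℕ → Option β := fun a w => (decode w).bind fun b => if R a b then some b else none
  have hg : Primrec₂ g :=
    Primrec.option_bind (Primrec.decode.comp Primrec.snd)
      (Primrec.ite (hR.comp (Primrec.fst.comp Primrec.fst) Primrec.snd)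
        (Primrec.option_some.comp Primrec.snd) (Primrec.const none)).to₂
  refine ⟨fun a => Nat.rfindOpt (g a), Partrec.rfindOpt hg.to_comp, fun a => ?_⟩
  obtain ⟨b, hb⟩ := h a
  have hdom : (Nat.rfindOpt (g a)).Dom := Nat.rfindOpt_dom.mpr ⟨encode b, b, by simp [g, hb]⟩
  obtain ⟨w, hw⟩ := Nat.rfindOpt_spec (Part.get_mem hdom)
  refine ⟨_, Part.get_mem hdom, ?_⟩
  simp only [g, Option.mem_def, Option.bind_eq_some_iff, Option.ite_none_right_eq_some,
    Option.some.injEq] at hw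
  obtain ⟨_, _, hR, rfl⟩ := hw
  exact hR

end Computability

theorem exists_finite_lt_infinite_eq {α : Type*} [Infinite α] (f : α → ℕ) {M : ℕ}
    (hM : ∀ x, f x ≤ M) : ∃ N, {x | N < f x}.Finite ∧ {x | f x = N}.Infinite := by
  classical
  have hex : ∃ n, {x | n < f x}.Finite :=
    ⟨M, Set.finite_empty.subset fun x hx => absurd (hM x) (not_le.mpr hx)⟩
  refine ⟨Nat.find hex, Nat.find_spec hex, ?_⟩
  have hge : {x | Nat.find hex ≤ f x}.Infinite := by
    rcases h : Nat.find hex with _ | m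
    · simpa using Set.infinite_univ
    · simpa [Nat.succ_le_iff] using Nat.find_min hex (m := m) (by omega)
  refine (hge.sdiff (Nat.find_spec hex)).mono fun x hx => ?_
  simp only [Set.mem_sdiff, Set.mem_ofPred_eq, not_lt] at hx
  exact le_antisymm hx.2 hx.1

theorem finite_setOf_mem_of_length_le (V : List Bool →. List Bool) (n : ℕ) :
    {s | ∃ p, s ∈ V p ∧ p.length ≤ n}.Finite := by
  refine ((List.finite_length_le Bool n).biUnion fun p _ => ?_).subset
    fun s ⟨p, hs, hp⟩ => Set.mem_biUnion hp hs
  exact Set.Subsingleton.finite fun _ ha _ hb => Part.mem_unique ha hb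

/-- `x = (t, s, L)`: `L` lists `N` distinct programs for `s`, all longer than `n` and all halting
within `t` stages of `g`. When `L₀` exceeds the length of every string with more than `N` programs,
`L` is necessarily the whole fiber of `s`. -/
def FiberCert (g : ℕ → List Bool → Option (List Bool)) (L₀ N n : ℕ)
    (x : ℕ × List Bool × List (List Bool)) : Prop :=
  L₀ ≤ x.2.1.length ∧ x.2.2.length = N ∧ x.2.2.Nodup ∧
    ∀ p ∈ x.2.2, n < p.length ∧ g x.1 p = some x.2.1

theorem primrecRel_fiberCert {g : ℕ → List Bool → Option (List Bool)} (hg : Primrec₂ g)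
    (L₀ N : ℕ) : PrimrecRel (FiberCert g L₀ N) := by
  have hs : Primrec fun a : ℕ × ℕ × List Bool × List (List Bool) => a.2.2.1 :=
    Primrec.fst.comp (Primrec.snd.comp Primrec.snd)
  have hL : Primrec fun a : ℕ × ℕ × List Bool × List (List Bool) => a.2.2.2 :=
    Primrec.snd.comp (Primrec.snd.comp Primrec.snd)
  have hprog : PrimrecRel fun (p : List Bool) (a : ℕ × ℕ × List Bool × List (List Bool)) =>
      a.1 < p.length ∧ g a.2.1 p = some a.2.2.1 :=
    PrimrecPred.and (Primrec.nat_lt.comp (Primrec.fst.comp Primrec.snd)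
        (Primrec.list_length.comp Primrec.fst))
      (Primrec.eq.comp (hg.comp (Primrec.fst.comp (Primrec.snd.comp Primrec.snd)) Primrec.fst)
        (Primrec.option_some.comp (hs.comp Primrec.snd)))
  exact PrimrecPred.and (Primrec.nat_le.comp (Primrec.const L₀) (Primrec.list_length.comp hs))
    (PrimrecPred.and (Primrec.eq.comp (Primrec.list_length.comp hL) (Primrec.const N))
      (PrimrecPred.and (Primrec.list_nodup.comp hL)
        ((PrimrecRel.forall_mem_list hprog).comp hL Primrec.id)))

section FiberCert

variable {V : List Bool →. List Bool} {g : ℕ → List Bool → Option (List Bool)} {L₀ N : ℕ}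

theorem FiberCert.lt_length (hgV : ∀ p s, s ∈ V p ↔ ∃ t, g t p = some s)
    (hfin : ∀ s, {p | s ∈ V p}.Finite) (hL₀ : ∀ s, L₀ ≤ s.length → {p | s ∈ V p}.ncard ≤ N)
    {n : ℕ} {x : ℕ × List Bool × List (List Bool)} (hx : FiberCert g L₀ N n x) {p : List Bool}
    (hp : x.2.1 ∈ V p) : n < p.length := by
  obtain ⟨hlen, hcard, hnodup, hprog⟩ := hx
  have hsub : {q | q ∈ x.2.2} ⊆ {q | x.2.1 ∈ V q} := fun q hq => (hgV _ _).2 ⟨_, (hprog q hq).2⟩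
  have hcard' : {q | x.2.1 ∈ V q}.ncard ≤ {q | q ∈ x.2.2}.ncard := by
    rw [show {q | q ∈ x.2.2} = (x.2.2.toFinset : Set (List Bool)) by ext; simp,
      Set.ncard_coe_finset, List.toFinset_card_of_nodup hnodup, hcard]
    exact hL₀ _ hlen
  have heq := Set.eq_of_subset_of_ncard_le hsub hcard' (hfin _)
  exact (hprog p (heq ▸ hp : p ∈ {q | q ∈ x.2.2})).1

theorem exists_fiberCert (hmono : ∀ ⦃t t' p s⦄, t ≤ t' → g t p = some s → g t' p = some s)
    (hgV : ∀ p s, s ∈ V p ↔ ∃ t, g t p = some s) (hfin : ∀ s, {p | s ∈ V p}.Finite)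
    (heq : {s | {p | s ∈ V p}.ncard = N}.Infinite) (n : ℕ) :
    ∃ x, FiberCert g L₀ N n x := by
  have hsmall : ({s : List Bool | s.length < L₀} ∪ {s | ∃ p, s ∈ V p ∧ p.length ≤ n}).Finite :=
    (List.finite_length_lt Bool L₀).union (finite_setOf_mem_of_length_le V n)
  obtain ⟨s, hsN, hs⟩ := (heq.sdiff hsmall).nonempty
  simp only [Set.mem_union, Set.mem_ofPred_eq, not_or, not_lt, not_exists, not_and, not_le] at hs
  set L := (hfin s).toFinset.toList
  have hL : ∀ p, p ∈ L ↔ s ∈ V p := by simp [L]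
  obtain ⟨t, ht⟩ := exists_stage_forall_mem hmono fun p hp => (hgV p s).1 ((hL p).1 hp)
  refine ⟨(t, s, L), hs.1, ?_, Finset.nodup_toList _, fun p hp => ⟨hs.2 p ((hL p).1 hp), ht p hp⟩⟩
  rw [Finset.length_toList, ← Set.ncard_eq_toFinset_card _ (hfin s)]
  exact hsN

end FiberCert

theorem exists_partrec_forall_lt_length {V : List Bool →. List Bool} (hV : Partrec V)
    (hfin : ∀ s, {p | s ∈ V p}.Finite) {N : ℕ}
    (hgt : {s | N < {p | s ∈ V p}.ncard}.Finite) (heq : {s | {p | s ∈ V p}.ncard = N}.Infinite) :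
    ∃ F : ℕ →. List Bool, Partrec F ∧ ∀ n, ∃ s ∈ F n, ∀ p, s ∈ V p → n < p.length := by
  obtain ⟨g, hg, hmono, hgV⟩ := hV.exists_primrec_stage
  obtain ⟨B, hB⟩ := (hgt.image List.length).bddAbove
  have hL₀ : ∀ s : List Bool, B + 1 ≤ s.length → {p | s ∈ V p}.ncard ≤ N := fun s hs => by
    by_contra! h
    exact absurd (hB ⟨s, h, rfl⟩) (by omega)
  obtain ⟨f, hf, hfcert⟩ := (primrecRel_fiberCert hg (B + 1) N).exists_partrec_choice
    (exists_fiberCert hmono hgV hfin heq)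
  refine ⟨fun n => (f n).map (·.2.1),
    hf.map (Computable.fst.comp (Computable.snd.comp Computable.snd)).to₂, fun n => ?_⟩
  obtain ⟨x, hx, hcert⟩ := hfcert n
  exact ⟨x.2.1, Part.mem_map _ hx,
    fun p => hcert.lt_length hgV hfin hL₀⟩

theorem OptimalPFM.not_forall_lt_length {V : List Bool →. List Bool} (hV : OptimalPFM V)
    {F : ℕ →. List Bool} (hF : Partrec F) : ¬ ∀ n, ∃ s ∈ F n, ∀ p, s ∈ V p → n < p.length := by
  intro hlong
  obtain ⟨d, hd⟩ := hV.exists_length_le_of_partrec (hF.comp Primrec.nat_double.to_comp)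
  obtain ⟨s, hs, hlen⟩ := hlong (2 * (d + 1))
  obtain ⟨q, hq, hqlen⟩ := hd (d + 1) s hs
  have := hlen q hq
  omega

/-- If `V` is optimal and every `V⁻¹(s)` is finite, then `s ↦ #V⁻¹(s)` is unbounded. -/
theorem card_fiber_unbounded (V : List Bool →. List Bool) (hV : OptimalPFM V)
    (hfin : ∀ s, {p : List Bool | s ∈ V p}.Finite) :
    ∀ M : ℕ, ∃ s : List Bool, M < {p : List Bool | s ∈ V p}.ncard := by
  intro M
  by_contra! hM
  obtain ⟨N, hgt, heq⟩ := exists_finite_lt_infinite_eq (fun s => {p | s ∈ V p}.ncard) hM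
  obtain ⟨F, hF, hlong⟩ := exists_partrec_forall_lt_length hV.1.1 hfin hgt heq
  exact hV.not_forall_lt_length hF hlong
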